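/- arXiv:2509.10070 — 2 statements merged into one kernel-verified Lean document; each statement's English description precedes it below -/
import Mathlib

section
/- Let G be a perfect cancellation graph with n vertices, m edges, and c connected components. Then G admits a graphic parity network of size exactly m + n − c. -/
/-!
Let `v` be the σ-first vertex of a connected graph with perfect cancellation ordering `σ`, and let
`K` be a component of `G - v`. Inductively `G[K]` has a network with `m_K + n_K - 1` gates in
which, at every vertex, the edges to σ-earlier neighbours are displayed before those to σ-later
ones. The neighbours `a₀ < a₁ < ⋯ < a_k` of `v` in `K` form a path of `G` (this is the perfect
cancellation condition), so the edges of this path are displayed in this order, and wire `v` can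
be threaded through the network of `K`: `CNOT(a₀, v)` loads `{v, a₀}`; whenever `{a_{j-1}, a_j}`
appears on some wire, a CNOT from that wire turns `{v, a_{j-1}}` into `{v, a_j}`; `CNOT(a_k, v)`
restores `{v}`. This costs `deg_K v + 1` gates, displays every edge at `v` and preserves the
ordering property. Concatenating these blocks over the components of `G - v`, and then the
networks of the components of `G`, gives `m + n - c` gates.
-/

/-- Apply a CNOT gate `g = (control, target)` to a state `t : V → Finset V`:
the target wire receives the symmetric difference of the control and target terms,
all other wires are unchanged. -/
def applyGate {V : Type*} [DecidableEq V] (g : V × V) (t : V → Finset V) : V → Finset V :=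
  fun w => if w = g.2 then symmDiff (t g.1) (t g.2) else t w

/-- Run a circuit (a list of CNOT gates) from the initial state `term v = {v}`. -/
def runCircuit {V : Type*} [DecidableEq V] (C : List (V × V)) : V → Finset V :=
  C.foldl (fun t g => applyGate g t) (fun v => {v})

/-- `C` is a graphic parity network for the graph `G`:
every gate has distinct control and target, every edge `{u, v}` of `G` appears as the
term of some wire after some prefix of the circuit, and the final state is the initial
state. Its size is `C.length`. -/
def IsGPN {V : Type*} [DecidableEq V] (G : SimpleGraph V) (C : List (V × V)) : Prop :=
  (∀ g ∈ C, g.1 ≠ g.2) ∧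
  (∀ u v : V, G.Adj u v → ∃ (k : ℕ) (w : V), runCircuit (C.take k) w = {u, v}) ∧
  (∀ v : V, runCircuit C v = {v})

/-- A set `U` is `σ`-linked if any two vertices of `U` that are consecutive in the
restriction of the ordering `σ` to `U` are adjacent in `G`. -/
def SigmaLinked {V : Type*} (G : SimpleGraph V) {n : ℕ} (σ : V ≃ Fin n) (U : Set V) :
    Prop :=
  ∀ ⦃a b : V⦄, a ∈ U → b ∈ U → σ a < σ b →
    (∀ w ∈ U, ¬(σ a < σ w ∧ σ w < σ b)) → G.Adj a b

/-- The set of neighbors of `v` occurring after `v` in the ordering `σ`. -/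
def NPlus {V : Type*} (G : SimpleGraph V) {n : ℕ} (σ : V ≃ Fin n) (v : V) : Set V :=
  {u | G.Adj v u ∧ σ v < σ u}

/-- `σ` is a perfect cancellation ordering of `G`: for every vertex `v` and every
connected component `K` of `G − v`, the set `N⁺_σ(v) ∩ K` is `σ`-linked. -/
def IsPCO {V : Type*} [Fintype V] (G : SimpleGraph V)
    (σ : V ≃ Fin (Fintype.card V)) : Prop :=
  ∀ (v : V) (K : (G.induce {u : V | u ≠ v}).ConnectedComponent),
    SigmaLinked G σ (NPlus G σ v ∩ (Subtype.val '' K.supp))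

/-- A perfect cancellation graph is a graph admitting a perfect cancellation ordering. -/
def PerfectCancellationGraph {V : Type*} [Fintype V] (G : SimpleGraph V) : Prop :=
  ∃ σ : V ≃ Fin (Fintype.card V), IsPCO G σ

open Finset Function

section Circuit

def initState {V : Type*} : V → Finset V := fun v => {v}

variable {V : Type*} [DecidableEq V]

theorem singleton_symmDiff_singleton {a v : V} (h : a ≠ v) :
    symmDiff ({a} : Finset V) {v} = {v, a} := by
  ext x
  simp only [mem_symmDiff, mem_insert, mem_singleton]
  grind

theorem singleton_symmDiff_pair {a v : V} (h : v ≠ a) :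
    symmDiff ({a} : Finset V) {v, a} = {v} := by
  ext x
  simp only [mem_symmDiff, mem_insert, mem_singleton]
  grind

theorem pair_symmDiff_pair {a b v : V} (hab : a ≠ b) (hva : v ≠ a) (hvb : v ≠ b) :
    symmDiff ({a, b} : Finset V) {v, a} = {v, b} := by
  ext x
  simp only [mem_symmDiff, mem_insert, mem_singleton]
  grind

def applyCircuit (C : List (V × V)) (t : V → Finset V) : V → Finset V :=
  C.foldl (fun t g => applyGate g t) t

theorem runCircuit_eq_applyCircuit (C : List (V × V)) :
    runCircuit C = applyCircuit C initState := rfl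

@[simp] theorem applyCircuit_nil (t : V → Finset V) : applyCircuit [] t = t := rfl

@[simp] theorem applyCircuit_cons (g : V × V) (C : List (V × V)) (t : V → Finset V) :
    applyCircuit (g :: C) t = applyCircuit C (applyGate g t) := rfl

@[simp] theorem applyCircuit_append (C D : List (V × V)) (t : V → Finset V) :
    applyCircuit (C ++ D) t = applyCircuit D (applyCircuit C t) :=
  List.foldl_append

theorem applyGate_eq_update (g : V × V) (t : V → Finset V) :
    applyGate g t = update t g.2 (symmDiff (t g.1) (t g.2)) := by
  funext w
  by_cases h : w = g.2 <;> simp [applyGate, h]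

theorem applyGate_update_of_ne {g : V × V} {v : V} (h₁ : g.1 ≠ v) (h₂ : g.2 ≠ v)
    (t : V → Finset V) (X : Finset V) :
    applyGate g (update t v X) = update (applyGate g t) v X := by
  simp only [applyGate_eq_update, update_of_ne h₁, update_of_ne h₂, update_comm h₂]

theorem applyCircuit_update_of_forall_ne {C : List (V × V)} {v : V}
    (h : ∀ g ∈ C, g.1 ≠ v ∧ g.2 ≠ v) (t : V → Finset V) (X : Finset V) :
    applyCircuit C (update t v X) = update (applyCircuit C t) v X := by
  induction C generalizing t with
  | nil => rfl
  | cons g C ih =>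
    have hg := h g List.mem_cons_self
    rw [applyCircuit_cons, applyGate_update_of_ne hg.1 hg.2,
      ih (fun g' hg' => h g' (List.mem_cons_of_mem g hg'))]
    rfl

theorem applyCircuit_apply_of_forall_ne {C : List (V × V)} {w : V}
    (h : ∀ g ∈ C, g.2 ≠ w) (t : V → Finset V) : applyCircuit C t w = t w := by
  induction C generalizing t with
  | nil => rfl
  | cons g C ih =>
    rw [applyCircuit_cons, ih (fun g' hg' => h g' (List.mem_cons_of_mem g hg'))]
    exact if_neg (h g List.mem_cons_self).symm

theorem applyCircuit_take_drop (C : List (V × V)) {p q : ℕ} (hpq : p ≤ q) (t : V → Finset V) :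
    applyCircuit ((C.take q).drop p) (applyCircuit (C.take p) t) = applyCircuit (C.take q) t := by
  have hp : C.take p = (C.take q).take p := by rw [List.take_take, min_eq_left hpq]
  rw [← applyCircuit_append, hp, List.take_append_drop]

theorem applyCircuit_take_drop_update {C : List (V × V)} {v : V}
    (hCv : ∀ g ∈ C, g.1 ≠ v ∧ g.2 ≠ v) {p q : ℕ} (hpq : p ≤ q) (X : Finset V) :
    applyCircuit ((C.take q).drop p) (update (runCircuit (C.take p)) v X) =
      update (runCircuit (C.take q)) v X := by
  rw [applyCircuit_update_of_forall_ne
      (fun g hg => hCv g (List.mem_of_mem_take (List.mem_of_mem_drop hg))),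
    runCircuit_eq_applyCircuit, runCircuit_eq_applyCircuit, applyCircuit_take_drop C hpq]

theorem applyGate_initState {a v : V} (hav : a ≠ v) :
    applyGate (a, v) initState = update initState v {v, a} := by
  rw [applyGate_eq_update]
  exact congrArg _ (singleton_symmDiff_singleton hav)

theorem pair_ne_singleton {a b : V} (hab : a ≠ b) (w : V) : ({a, b} : Finset V) ≠ {w} :=
  fun h => by simpa [h] using card_pair hab

theorem exists_target_of_runCircuit_ne {C : List (V × V)} {w : V} (h : runCircuit C w ≠ {w}) :
    ∃ g ∈ C, g.2 = w := by
  by_contra! hC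
  exact h (applyCircuit_apply_of_forall_ne hC initState)

theorem pos_and_le_length_of_runCircuit_take_eq_pair {C : List (V × V)}
    (hC : runCircuit C = initState) {k : ℕ} {w a b : V} (hab : a ≠ b)
    (h : runCircuit (C.take k) w = {a, b}) : 0 < k ∧ k ≤ C.length := by
  constructor
  · by_contra! hk
    rw [Nat.le_zero.1 hk] at h
    exact pair_ne_singleton hab w h.symm
  · by_contra! hk
    rw [List.take_of_length_le hk.le, hC] at h
    exact pair_ne_singleton hab w h.symm

end Circuit

section Weave

variable {V : Type*} (C : List (V × V)) (v : V) (T : V → V → ℕ) (wire : V → V → V)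

/-- Threads the wire `v`, holding `{v, a}` after the first `p` gates of `C`, along the chain
`a :: l`: once `{a, b}` sits on `wire a b` (after `T a b` gates of `C`), the gate `(wire a b, v)`
turns `{v, a}` into `{v, b}`; the last gate restores `{v}`. -/
def weave : ℕ → V → List V → List (V × V)
  | p, a, [] => C.drop p ++ [(a, v)]
  | p, a, b :: l => (C.take (T a b)).drop p ++ (wire a b, v) :: weave (T a b) b l

def thread (a : V) (l : List V) : List (V × V) := (a, v) :: weave C v T wire 0 a l

/-- The length of the prefix of `weave C v T wire p a l` made of the first `q` gates of `C` and the
gates inserted among them. -/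
def weavePos (q : ℕ) : ℕ → V → List V → ℕ
  | p, _, [] => q - p
  | p, a, b :: l => if q < T a b then q - p else T a b - p + 1 + weavePos q (T a b) b l

def tokenAt (q : ℕ) : V → List V → V
  | a, [] => a
  | a, b :: l => if q < T a b then a else tokenAt q b l

variable {T}

theorem weavePos_lt_weavePos : ∀ {p q q' : ℕ} {a : V} {l : List V}, p ≤ q → q < q' →
    weavePos T q p a l < weavePos T q' p a l := by
  intro p q q' a l hpq hqq'
  induction l generalizing p a with
  | nil => simp only [weavePos]; omega
  | cons b l ih =>
    simp only [weavePos]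
    split_ifs with h h'
    all_goals first | omega | exact Nat.add_lt_add_left (ih (not_lt.1 h)) _

theorem weavePos_le_weavePos {p q q' : ℕ} {a : V} {l : List V} (hpq : p ≤ q) (hqq' : q ≤ q') :
    weavePos T q p a l ≤ weavePos T q' p a l := by
  rcases hqq'.eq_or_lt with rfl | h
  · exact le_rfl
  · exact (weavePos_lt_weavePos hpq h).le

end Weave

section Relay

variable {V : Type*} [DecidableEq V] (C : List (V × V)) (v : V) (τ : V → ℕ) (T : V → V → ℕ)
  (wire : V → V → V)

structure IsRelayStep (a b : V) : Prop where
  left_ne : a ≠ v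
  right_ne : b ≠ v
  lt_time : τ a < T a b
  time_le : T a b ≤ τ b
  time_le_length : T a b ≤ C.length
  runCircuit_take : runCircuit (C.take (T a b)) (wire a b) = {a, b}

variable {C v τ T wire}

theorem IsRelayStep.ne {a b : V} (h : IsRelayStep C v τ T wire a b) : a ≠ b := by
  rintro rfl
  exact absurd (h.lt_time.trans_le h.time_le) (lt_irrefl _)

theorem IsRelayStep.exists_gate_snd_eq {a b : V} (h : IsRelayStep C v τ T wire a b) :
    ∃ g ∈ C, g.2 = wire a b :=
  let ⟨g, hg, hg₂⟩ :=
    exists_target_of_runCircuit_ne (h.runCircuit_take.trans_ne (pair_ne_singleton h.ne _))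
  ⟨g, List.mem_of_mem_take hg, hg₂⟩

theorem IsRelayStep.wire_ne (hCv : ∀ g ∈ C, g.1 ≠ v ∧ g.2 ≠ v) {a b : V}
    (h : IsRelayStep C v τ T wire a b) : wire a b ≠ v :=
  let ⟨g, hg, hg₂⟩ := h.exists_gate_snd_eq
  hg₂ ▸ (hCv g hg).2

theorem applyCircuit_relayStep (hCv : ∀ g ∈ C, g.1 ≠ v ∧ g.2 ≠ v) {a b : V}
    (h : IsRelayStep C v τ T wire a b) {p : ℕ} (hp : p ≤ T a b) :
    applyCircuit ((C.take (T a b)).drop p ++ [(wire a b, v)])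
        (update (runCircuit (C.take p)) v {v, a}) =
      update (runCircuit (C.take (T a b))) v {v, b} := by
  rw [applyCircuit_append, applyCircuit_take_drop_update hCv hp, applyCircuit_cons,
    applyCircuit_nil, applyGate_eq_update]
  simp only [update_self, update_of_ne (h.wire_ne hCv), h.runCircuit_take, update_idem]
  rw [pair_symmDiff_pair h.ne h.left_ne.symm h.right_ne.symm]

theorem applyCircuit_weave (hCv : ∀ g ∈ C, g.1 ≠ v ∧ g.2 ≠ v) (hC : runCircuit C = initState) :
    ∀ {p : ℕ} {a : V} {l : List V}, (a :: l).IsChain (IsRelayStep C v τ T wire) → a ≠ v →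
      p ≤ τ a → applyCircuit (weave C v T wire p a l) (update (runCircuit (C.take p)) v {v, a}) =
        initState := by
  intro p a l hl hav hp
  induction l generalizing p a with
  | nil =>
    have hdrop : applyCircuit (C.drop p) (update (runCircuit (C.take p)) v {v, a}) =
        update initState v {v, a} := by
      rw [applyCircuit_update_of_forall_ne (fun g hg => hCv g (List.mem_of_mem_drop hg)),
        runCircuit_eq_applyCircuit, ← applyCircuit_append, List.take_append_drop,
        ← runCircuit_eq_applyCircuit, hC]
    rw [weave, applyCircuit_append, hdrop, applyCircuit_cons, applyCircuit_nil,
      applyGate_eq_update]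
    simp only [update_self, update_of_ne hav, update_idem]
    exact (congrArg (update initState v) (singleton_symmDiff_pair hav.symm)).trans
      (update_eq_self v initState)
  | cons b l ih =>
    obtain ⟨hab, hl⟩ := List.isChain_cons_cons.1 hl
    rw [weave, ← List.singleton_append, ← List.append_assoc, applyCircuit_append,
      applyCircuit_relayStep hCv hab (hp.trans hab.lt_time.le)]
    exact ih hl hab.right_ne hab.time_le

theorem applyCircuit_weave_take (hCv : ∀ g ∈ C, g.1 ≠ v ∧ g.2 ≠ v) :
    ∀ {p q : ℕ} {a : V} {l : List V}, (a :: l).IsChain (IsRelayStep C v τ T wire) →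
      p ≤ τ a → p ≤ q → q ≤ C.length →
      applyCircuit ((weave C v T wire p a l).take (weavePos T q p a l))
          (update (runCircuit (C.take p)) v {v, a}) =
        update (runCircuit (C.take q)) v {v, tokenAt T q a l} := by
  intro p q a l hl hp hpq hq
  induction l generalizing p a with
  | nil =>
    rw [weave, weavePos, tokenAt, List.take_append_of_le_length (by simp; omega), List.take_drop,
      Nat.add_sub_cancel' hpq, applyCircuit_take_drop_update hCv hpq]
  | cons b l ih =>
    obtain ⟨hab, hl⟩ := List.isChain_cons_cons.1 hl
    have hpT : p ≤ T a b := hp.trans hab.lt_time.le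
    by_cases hqT : q < T a b
    · rw [weave, weavePos, tokenAt, if_pos hqT, if_pos hqT,
        List.take_append_of_le_length (by simp; omega), List.take_drop, Nat.add_sub_cancel' hpq,
        List.take_take, min_eq_left hqT.le, applyCircuit_take_drop_update hCv hpq]
    · have hlen : ((C.take (T a b)).drop p ++ [(wire a b, v)]).length = T a b - p + 1 := by
        simp; omega
      rw [weave, weavePos, tokenAt, if_neg hqT, if_neg hqT, ← List.singleton_append,
        ← List.append_assoc, ← hlen, List.take_length_add_append, applyCircuit_append,
        applyCircuit_relayStep hCv hab hpT]
      exact ih hl hab.time_le (not_lt.1 hqT)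

theorem le_of_mem_of_isChain_relayStep : ∀ {a z : V} {l : List V},
    (a :: l).IsChain (IsRelayStep C v τ T wire) → z ∈ a :: l → τ a ≤ τ z := by
  intro a z l hl hz
  induction l generalizing a with
  | nil => rw [List.mem_singleton.1 hz]
  | cons b l ih =>
    obtain ⟨hab, hl⟩ := List.isChain_cons_cons.1 hl
    rcases List.mem_cons.1 hz with rfl | hz
    · exact le_rfl
    · exact (hab.lt_time.trans_le hab.time_le).le.trans (ih hl hz)

theorem tokenAt_min_eq : ∀ {a z : V} {l : List V}, (a :: l).IsChain (IsRelayStep C v τ T wire) →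
    z ∈ a :: l → tokenAt T (min (τ z) C.length) a l = z := by
  intro a z l hl hz
  induction l generalizing a with
  | nil => rw [List.mem_singleton.1 hz, tokenAt]
  | cons b l ih =>
    obtain ⟨hab, hl⟩ := List.isChain_cons_cons.1 hl
    rw [tokenAt]
    rcases List.mem_cons.1 hz with rfl | hz
    · exact if_pos (min_lt_iff.2 (Or.inl hab.lt_time))
    · have := le_of_mem_of_isChain_relayStep hl hz
      rw [if_neg (not_lt.2 (le_min (hab.time_le.trans this) hab.time_le_length))]
      exact ih hl hz

theorem length_weave : ∀ {p : ℕ} {a : V} {l : List V},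
    (a :: l).IsChain (IsRelayStep C v τ T wire) → p ≤ τ a →
    (weave C v T wire p a l).length = C.length - p + l.length + 1 := by
  intro p a l hl hp
  induction l generalizing p a with
  | nil => simp [weave]
  | cons b l ih =>
    obtain ⟨hab, hl⟩ := List.isChain_cons_cons.1 hl
    have := hab.lt_time; have := hab.time_le_length
    simp only [weave, List.length_append, List.length_drop, List.length_take, List.length_cons,
      ih hl hab.time_le]
    omega

theorem mem_weave : ∀ {p : ℕ} {a : V} {l : List V},
    (a :: l).IsChain (IsRelayStep C v τ T wire) → ∀ g ∈ weave C v T wire p a l,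
      g ∈ C ∨ g.2 = v ∧ (g.1 ∈ a :: l ∨ ∃ g' ∈ C, g'.2 = g.1) := by
  intro p a l hl g hg
  induction l generalizing p a with
  | nil =>
    simp only [weave, List.mem_append, List.mem_singleton] at hg
    rcases hg with hg | rfl
    · exact Or.inl (List.mem_of_mem_drop hg)
    · simp
  | cons b l ih =>
    obtain ⟨hab, hl⟩ := List.isChain_cons_cons.1 hl
    simp only [weave, List.mem_append, List.mem_cons] at hg
    rcases hg with hg | rfl | hg
    · exact Or.inl (List.mem_of_mem_take (List.mem_of_mem_drop hg))
    · exact Or.inr ⟨rfl, Or.inr hab.exists_gate_snd_eq⟩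
    · rcases ih hl hg with h | ⟨h₁, h₂ | h₂⟩
      · exact Or.inl h
      · exact Or.inr ⟨h₁, Or.inl (List.mem_cons_of_mem a h₂)⟩
      · exact Or.inr ⟨h₁, Or.inr h₂⟩

theorem runCircuit_thread_take (hCv : ∀ g ∈ C, g.1 ≠ v ∧ g.2 ≠ v) {a : V} {l : List V}
    (hl : (a :: l).IsChain (IsRelayStep C v τ T wire)) (hav : a ≠ v) {q : ℕ}
    (hq : q ≤ C.length) :
    runCircuit ((thread C v T wire a l).take (1 + weavePos T q 0 a l)) =
      update (runCircuit (C.take q)) v {v, tokenAt T q a l} := by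
  rw [thread, add_comm, List.take_succ_cons, runCircuit_eq_applyCircuit, applyCircuit_cons,
    applyGate_initState hav]
  exact applyCircuit_weave_take hCv hl (Nat.zero_le _) (Nat.zero_le _) hq

theorem runCircuit_thread (hCv : ∀ g ∈ C, g.1 ≠ v ∧ g.2 ≠ v) (hC : runCircuit C = initState)
    {a : V} {l : List V} (hl : (a :: l).IsChain (IsRelayStep C v τ T wire)) (hav : a ≠ v) :
    runCircuit (thread C v T wire a l) = initState := by
  rw [thread, runCircuit_eq_applyCircuit, applyCircuit_cons, applyGate_initState hav]
  exact applyCircuit_weave hCv hC hl hav (Nat.zero_le _)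

theorem mem_thread {a : V} {l : List V} (hl : (a :: l).IsChain (IsRelayStep C v τ T wire))
    {g : V × V} (hg : g ∈ thread C v T wire a l) :
    g ∈ C ∨ g.2 = v ∧ (g.1 ∈ a :: l ∨ ∃ g' ∈ C, g'.2 = g.1) := by
  rcases List.mem_cons.1 hg with rfl | hg
  · exact Or.inr ⟨rfl, Or.inl List.mem_cons_self⟩
  · exact mem_weave hl g hg

theorem length_thread {a : V} {l : List V} (hl : (a :: l).IsChain (IsRelayStep C v τ T wire)) :
    (thread C v T wire a l).length = C.length + l.length + 2 := by
  rw [thread, List.length_cons, length_weave hl (Nat.zero_le _)]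
  omega
end Relay

section Network

variable {V : Type*} {n : ℕ} (G : SimpleGraph V) (σ : V ≃ Fin n)

def UpEdge (s : Finset V) (a b : V) : Prop := G.Adj a b ∧ a ∈ s ∧ b ∈ s ∧ σ a < σ b

open scoped Classical in
noncomputable def upEdges (s : Finset V) : Finset (V × V) :=
  (s ×ˢ s).filter (fun p => G.Adj p.1 p.2 ∧ σ p.1 < σ p.2)

variable {G σ}

theorem mem_upEdges {s : Finset V} {p : V × V} : p ∈ upEdges G σ s ↔ UpEdge G σ s p.1 p.2 := by
  simp only [upEdges, UpEdge, mem_filter, mem_product]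
  tauto

theorem UpEdge.ne {s : Finset V} {a b : V} (h : UpEdge G σ s a b) : a ≠ b :=
  h.1.ne

theorem UpEdge.mono {s t : Finset V} (hst : s ⊆ t) {a b : V} (h : UpEdge G σ s a b) :
    UpEdge G σ t a b :=
  ⟨h.1, hst h.2.1, hst h.2.2.1, h.2.2.2⟩

theorem card_upEdges_univ [Fintype V] : #(upEdges G σ univ) = Nat.card G.edgeSet := by
  classical
  rw [Nat.card_eq_fintype_card, ← Set.toFinset_card]
  refine card_nbij (fun p => s(p.1, p.2)) (fun p hp => ?_) (fun p hp q hq hpq => ?_) fun e he => ?_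
  · simpa using (mem_upEdges.1 hp).1
  · obtain ⟨-, -, -, hp⟩ := mem_upEdges.1 hp
    obtain ⟨-, -, -, hq⟩ := mem_upEdges.1 hq
    rcases Sym2.eq_iff.1 hpq with ⟨h₁, h₂⟩ | ⟨h₁, h₂⟩
    · exact Prod.ext h₁ h₂
    · rw [h₁, h₂] at hp
      exact absurd (hp.trans hq) (lt_irrefl _)
  · induction e with
    | h x y =>
    have hxy : G.Adj x y := by simpa using he
    rcases lt_or_gt_of_ne (σ.injective.ne hxy.ne) with hlt | hlt
    · exact ⟨(x, y), mem_upEdges.2 ⟨hxy, mem_univ _, mem_univ _, hlt⟩, rfl⟩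
    · exact ⟨(y, x), mem_upEdges.2 ⟨hxy.symm, mem_univ _, mem_univ _, hlt⟩, Sym2.eq_swap⟩

variable [DecidableEq V]

variable (G σ) in
/-- `C` is a parity network on the wires of `s` displaying every edge of `G[s]`, scheduled so that
at every vertex the edges to σ-smaller neighbours are displayed before those to σ-larger ones,
the switch happening at time `τ`. -/
structure IsTimedNetwork (s : Finset V) (C : List (V × V)) : Prop where
  gate_ne : ∀ g ∈ C, g.1 ≠ g.2
  gate_mem : ∀ g ∈ C, g.1 ∈ s ∧ g.2 ∈ s
  runCircuit_eq : runCircuit C = initState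
  exists_schedule : ∃ τ : V → ℕ, ∀ a b, UpEdge G σ s a b →
    ∃ k w, τ a < k ∧ k ≤ τ b ∧ runCircuit (C.take k) w = {a, b}

theorem UpEdge.of_union {s t : Finset V} (hsep : ∀ a ∈ s \ t, ∀ b ∈ t \ s, ¬G.Adj a b)
    (hlow : ∀ a ∈ s ∩ t, ∀ b ∈ s ∪ t, σ a ≤ σ b) {a b : V} (h : UpEdge G σ (s ∪ t) a b) :
    UpEdge G σ s a b ∨ b ∉ s ∧ UpEdge G σ t a b := by
  obtain ⟨hadj, ha, hb, hlt⟩ := h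
  by_cases hbs : b ∈ s
  · refine Or.inl ⟨hadj, ?_, hbs, hlt⟩
    by_contra has
    have hat : a ∈ t := (mem_union.1 ha).resolve_left has
    by_cases hbt : b ∈ t
    · exact absurd (hlow b (mem_inter.2 ⟨hbs, hbt⟩) a ha) (not_le.2 hlt)
    · exact hsep b (mem_sdiff.2 ⟨hbs, hbt⟩) a (mem_sdiff.2 ⟨hat, has⟩) hadj.symm
  · refine Or.inr ⟨hbs, hadj, ?_, (mem_union.1 hb).resolve_left hbs, hlt⟩
    by_contra hat
    have has : a ∈ s := (mem_union.1 ha).resolve_right hat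
    exact hsep a (mem_sdiff.2 ⟨has, hat⟩) b (mem_sdiff.2 ⟨(mem_union.1 hb).resolve_left hbs, hbs⟩)
      hadj

theorem card_upEdges_union {s t : Finset V} (hsep : ∀ a ∈ s \ t, ∀ b ∈ t \ s, ¬G.Adj a b)
    (hlow : ∀ a ∈ s ∩ t, ∀ b ∈ s ∪ t, σ a ≤ σ b) :
    #(upEdges G σ (s ∪ t)) = #(upEdges G σ s) + #(upEdges G σ t) := by
  rw [← card_union_of_disjoint]
  · congr 1
    ext p
    simp only [mem_union, mem_upEdges]
    refine ⟨fun h => ?_, fun h => ?_⟩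
    · exact (h.of_union hsep hlow).imp_right And.right
    · exact h.elim (UpEdge.mono subset_union_left) (UpEdge.mono subset_union_right)
  · refine disjoint_left.2 fun p hs ht => ?_
    obtain ⟨-, -, hbs, hlt⟩ := mem_upEdges.1 hs
    obtain ⟨-, hat, hbt, -⟩ := mem_upEdges.1 ht
    exact absurd (hlow p.2 (mem_inter.2 ⟨hbs, hbt⟩) p.1 (mem_union_right s hat)) (not_le.2 hlt)

open scoped Classical in
theorem card_upEdges_insert {v : V} {K : Finset V} (hv : v ∉ K) (hlt : ∀ z ∈ K, σ v < σ z) :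
    #(upEdges G σ (insert v K)) = #(upEdges G σ K) + #(K.filter (G.Adj v)) := by
  rw [← card_filter_add_card_filter_not (s := upEdges G σ (insert v K)) (fun p => p.1 ≠ v)]
  congr 1
  · congr 1
    ext ⟨a, b⟩
    simp only [mem_filter, mem_upEdges, UpEdge, mem_insert]
    refine ⟨fun ⟨⟨hadj, ha, hb, hab⟩, hav⟩ => ⟨hadj, ha.resolve_left hav, ?_, hab⟩,
      fun ⟨hadj, ha, hb, hab⟩ => ⟨⟨hadj, Or.inr ha, Or.inr hb, hab⟩, fun hav => hv (hav ▸ ha)⟩⟩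
    refine hb.resolve_left fun hbv => ?_
    exact absurd (hlt a (ha.resolve_left hav)) (not_lt.2 (hbv ▸ hab.le))
  · rw [← one_mul #(K.filter (G.Adj v)), ← card_singleton v, ← card_product]
    congr 1
    ext ⟨a, b⟩
    simp only [mem_filter, mem_upEdges, UpEdge, mem_product, mem_singleton, mem_insert, not_not]
    refine ⟨fun ⟨⟨hadj, _, hb, hab⟩, rfl⟩ => ⟨rfl, ?_, hadj⟩, fun ⟨rfl, hb, hadj⟩ => ?_⟩
    · exact hb.resolve_left (fun hbv => absurd hab (hbv ▸ lt_irrefl _))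
    · exact ⟨⟨hadj, Or.inl rfl, Or.inr hb, hlt b hb⟩, rfl⟩

theorem isTimedNetwork_nil {s : Finset V} (hs : ∀ a b, ¬UpEdge G σ s a b) :
    IsTimedNetwork G σ s [] :=
  ⟨by simp, by simp, rfl, ⟨0, fun a b h => absurd h (hs a b)⟩⟩

theorem IsTimedNetwork.append {s t : Finset V} {C D : List (V × V)}
    (hC : IsTimedNetwork G σ s C) (hD : IsTimedNetwork G σ t D)
    (hsep : ∀ a ∈ s \ t, ∀ b ∈ t \ s, ¬G.Adj a b)
    (hlow : ∀ a ∈ s ∩ t, ∀ b ∈ s ∪ t, σ a ≤ σ b) :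
    IsTimedNetwork G σ (s ∪ t) (C ++ D) := by
  obtain ⟨τC, hτC⟩ := hC.exists_schedule
  obtain ⟨τD, hτD⟩ := hD.exists_schedule
  have hrun (k : ℕ) : runCircuit (C ++ D.take k) = runCircuit (D.take k) := by
    rw [runCircuit_eq_applyCircuit, applyCircuit_append, ← runCircuit_eq_applyCircuit,
      hC.runCircuit_eq, runCircuit_eq_applyCircuit]
  have hCD : runCircuit (C ++ D) = initState := by
    simpa [hD.runCircuit_eq] using hrun D.length
  refine ⟨fun g hg => ?_, fun g hg => ?_, hCD,
    ⟨fun x => if x ∈ s then min (τC x) C.length else C.length + τD x, fun a b hab => ?_⟩⟩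
  · exact (List.mem_append.1 hg).elim (hC.gate_ne g) (hD.gate_ne g)
  · rcases List.mem_append.1 hg with hg | hg
    · exact (hC.gate_mem g hg).imp (mem_union_left t) (mem_union_left t)
    · exact (hD.gate_mem g hg).imp (mem_union_right s) (mem_union_right s)
  rcases hab.of_union hsep hlow with hab | ⟨hbs, hab⟩
  · obtain ⟨k, w, hak, hkb, hk⟩ := hτC a b hab
    have hkC := (pos_and_le_length_of_runCircuit_take_eq_pair hC.runCircuit_eq hab.ne hk).2
    refine ⟨k, w, ?_, ?_, by rwa [List.take_append_of_le_length hkC]⟩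
    · simpa [if_pos hab.2.1] using Or.inl hak
    · simpa [if_pos hab.2.2.1] using ⟨hkb, hkC⟩
  · obtain ⟨k, w, hak, hkb, hk⟩ := hτD a b hab
    have hk0 := (pos_and_le_length_of_runCircuit_take_eq_pair hD.runCircuit_eq hab.ne hk).1
    refine ⟨C.length + k, w, ?_, by simpa [if_neg hbs] using hkb, ?_⟩
    · dsimp only
      split_ifs
      · exact (min_le_right _ _).trans_lt (Nat.lt_add_of_pos_right hk0)
      · exact Nat.add_lt_add_left hak _
    · rw [List.take_length_add_append, hrun, hk]

theorem separated_union_union {A K L : Finset V} (hKL : Disjoint K L)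
    (hsep : ∀ a ∈ K, ∀ b ∈ L, ¬G.Adj a b) (hlow : ∀ a ∈ A, ∀ b ∈ A ∪ (K ∪ L), σ a ≤ σ b) :
    (∀ a ∈ (A ∪ K) \ (A ∪ L), ∀ b ∈ (A ∪ L) \ (A ∪ K), ¬G.Adj a b) ∧
      ∀ a ∈ (A ∪ K) ∩ (A ∪ L), ∀ b ∈ (A ∪ K) ∪ (A ∪ L), σ a ≤ σ b := by
  refine ⟨fun a ha b hb => ?_, fun a ha b hb => ?_⟩
  · simp only [mem_sdiff, mem_union, not_or] at ha hb
    exact hsep a (ha.1.resolve_left ha.2.1) b (hb.1.resolve_left hb.2.1)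
  · rw [← union_union_distrib_left] at hb
    refine hlow a ?_ b hb
    rw [← union_inter_distrib_left, disjoint_iff_inter_eq_empty.1 hKL, union_empty] at ha
    exact ha

theorem exists_isTimedNetwork_union_biUnion {ι : Type*} [DecidableEq ι] (A : Finset V)
    (K : ι → Finset V) (k : ℕ) (I : Finset ι)
    (hK : ∀ i ∈ I, ∀ j ∈ I, i ≠ j → Disjoint (K i) (K j) ∧ ∀ a ∈ K i, ∀ b ∈ K j, ¬G.Adj a b)
    (hlow : ∀ a ∈ A, ∀ b ∈ A ∪ I.biUnion K, σ a ≤ σ b)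
    (hnet : ∀ i ∈ I, ∃ C, IsTimedNetwork G σ (A ∪ K i) C ∧
      C.length + k = #(upEdges G σ (A ∪ K i)) + #(K i)) :
    ∃ C, IsTimedNetwork G σ (A ∪ I.biUnion K) C ∧
      C.length + k * #I = #(upEdges G σ (A ∪ I.biUnion K)) + #(I.biUnion K) := by
  induction I using Finset.induction_on with
  | empty =>
    simp only [biUnion_empty, union_empty, card_empty, mul_zero, add_zero] at hlow ⊢
    have hA : ∀ a b, ¬UpEdge G σ A a b := fun a b h =>
      absurd (hlow b h.2.2.1 a h.2.1) (not_le.2 h.2.2.2)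
    exact ⟨[], isTimedNetwork_nil hA,
      (card_eq_zero.2 (eq_empty_of_forall_notMem fun p hp => hA p.1 p.2 (mem_upEdges.1 hp))).symm⟩
  | insert i I hi ih =>
    have hKi (j) (hj : j ∈ I) :=
      hK i (mem_insert_self i I) j (mem_insert_of_mem hj) (ne_of_mem_of_not_mem hj hi).symm
    have hdisj : Disjoint (K i) (I.biUnion K) :=
      (disjoint_biUnion_right _ _ _).2 fun j hj => (hKi j hj).1
    have hsep : ∀ a ∈ K i, ∀ b ∈ I.biUnion K, ¬G.Adj a b := fun a ha b hb =>
      let ⟨j, hj, hbj⟩ := mem_biUnion.1 hb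
      (hKi j hj).2 a ha b hbj
    rw [biUnion_insert] at hlow ⊢
    obtain ⟨C, hC, hClen⟩ := hnet i (mem_insert_self i I)
    obtain ⟨D, hD, hDlen⟩ := ih
      (fun i hi j hj => hK i (mem_insert_of_mem hi) j (mem_insert_of_mem hj))
      (fun a ha b hb => hlow a ha b (union_subset_union_right subset_union_right hb))
      (fun j hj => hnet j (mem_insert_of_mem hj))
    obtain ⟨hsep', hlow'⟩ := separated_union_union hdisj hsep hlow
    refine ⟨C ++ D, union_union_distrib_left A _ _ ▸ hC.append hD hsep' hlow', ?_⟩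
    rw [union_union_distrib_left, card_upEdges_union hsep' hlow', card_union_of_disjoint hdisj,
      card_insert_of_notMem hi, List.length_append]
    linarith

end Network

namespace SimpleGraph

variable {V : Type*} {G : SimpleGraph V}

@[simp] theorem spanningCoe_induce_adj {S : Set V} {a b : V} :
    (G.induce S).spanningCoe.Adj a b ↔ a ∈ S ∧ b ∈ S ∧ G.Adj a b := by
  simp only [map_adj, comap_adj, Function.Embedding.subtype_apply, Subtype.exists]
  aesop

theorem reachable_spanningCoe_induce_iff {S : Set V} {x y : S} :
    (G.induce S).spanningCoe.Reachable x y ↔ (G.induce S).Reachable x y := by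
  refine ⟨fun ⟨p⟩ => ?_, fun h => h.map (Embedding.map _ _).toHom⟩
  suffices ∀ {a b : V} (p : (G.induce S).spanningCoe.Walk a b) (ha : a ∈ S) (hb : b ∈ S),
      (G.induce S).Reachable ⟨a, ha⟩ ⟨b, hb⟩ from this p x.2 y.2
  intro a b p
  induction p with
  | nil => exact fun _ _ => Reachable.refl _
  | cons h _ ih =>
    obtain ⟨ha, hc, hadj⟩ := spanningCoe_induce_adj.1 h
    exact fun _ hb => (Adj.reachable (G := G.induce S) (u := ⟨_, ha⟩) (v := ⟨_, hc⟩) hadj).trans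
      (ih hc hb)

theorem Reachable.spanningCoe_induce_of_closed {S : Set V} (hS : ∀ a ∈ S, ∀ b, G.Adj a b → b ∈ S)
    {a b : V} (ha : a ∈ S) (h : G.Reachable a b) : (G.induce S).spanningCoe.Reachable a b := by
  obtain ⟨p⟩ := h
  induction p with
  | nil => rfl
  | cons h _ ih =>
    have hc := hS _ ha _ h
    exact (Adj.reachable (spanningCoe_induce_adj.2 ⟨ha, hc, h⟩)).trans (ih hc)

end SimpleGraph

section Components

open SimpleGraph

variable {V : Type*} (G : SimpleGraph V)

-- Empty when `x ∉ s`.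
noncomputable def componentIn (s : Finset V) (x : V) : Finset V :=
  open scoped Classical in s.filter ((G.induce (s : Set V)).spanningCoe.Reachable x)

variable {G}

theorem mem_componentIn {s : Finset V} {x y : V} :
    y ∈ componentIn G s x ↔ y ∈ s ∧ (G.induce (s : Set V)).spanningCoe.Reachable x y := by
  simp [componentIn]

theorem componentIn_subset (s : Finset V) (x : V) : componentIn G s x ⊆ s :=
  fun _ hy => (mem_componentIn.1 hy).1

theorem mem_componentIn_self {s : Finset V} {x : V} (hx : x ∈ s) : x ∈ componentIn G s x :=
  mem_componentIn.2 ⟨hx, Reachable.rfl⟩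

theorem componentIn_eq_of_mem {s : Finset V} {x y : V} (hy : y ∈ componentIn G s x) :
    componentIn G s y = componentIn G s x := by
  have hxy := (mem_componentIn.1 hy).2
  ext z
  simp only [mem_componentIn]
  exact and_congr_right fun _ => ⟨hxy.trans, hxy.symm.trans⟩

theorem mem_componentIn_of_adj {s : Finset V} {x y z : V} (hy : y ∈ componentIn G s x)
    (hz : z ∈ s) (h : G.Adj y z) : z ∈ componentIn G s x := by
  obtain ⟨hys, hxy⟩ := mem_componentIn.1 hy
  exact mem_componentIn.2 ⟨hz, hxy.trans (Adj.reachable (spanningCoe_induce_adj.2 ⟨hys, hz, h⟩))⟩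

theorem componentIn_disjoint_of_ne {s : Finset V} {x y : V}
    (h : componentIn G s x ≠ componentIn G s y) :
    Disjoint (componentIn G s x) (componentIn G s y) ∧
      ∀ a ∈ componentIn G s x, ∀ b ∈ componentIn G s y, ¬G.Adj a b := by
  have key : ∀ b ∈ componentIn G s y, b ∉ componentIn G s x := fun b hb hbx =>
    h ((componentIn_eq_of_mem hbx).symm.trans (componentIn_eq_of_mem hb))
  exact ⟨disjoint_right.2 key, fun a ha b hb hab =>
    key b hb (mem_componentIn_of_adj ha (componentIn_subset s y hb) hab)⟩

theorem biUnion_image_componentIn [DecidableEq V] (s : Finset V) :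
    (s.image (componentIn G s)).biUnion id = s := by
  ext y
  simp only [mem_biUnion, mem_image, id]
  exact ⟨fun ⟨_, ⟨x, _, rfl⟩, hy⟩ => componentIn_subset s x hy,
    fun hy => ⟨_, ⟨y, hy, rfl⟩, mem_componentIn_self hy⟩⟩

theorem componentIn_mono {s t : Finset V} (hst : s ⊆ t) (x : V) :
    componentIn G s x ⊆ componentIn G t x := by
  intro y hy
  obtain ⟨hys, hxy⟩ := mem_componentIn.1 hy
  refine mem_componentIn.2 ⟨hst hys, hxy.mono fun a b h => ?_⟩
  obtain ⟨ha, hb, hab⟩ := spanningCoe_induce_adj.1 h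
  exact spanningCoe_induce_adj.2 ⟨hst ha, hst hb, hab⟩

theorem preconnected_induce_componentIn (s : Finset V) (x : V) :
    (G.induce (componentIn G s x : Set V)).Preconnected := by
  rintro ⟨a, ha⟩ ⟨b, hb⟩
  rw [← reachable_spanningCoe_induce_iff]
  have hab : (G.induce (s : Set V)).spanningCoe.Reachable a b :=
    (mem_componentIn.1 ha).2.symm.trans (mem_componentIn.1 hb).2
  refine (hab.spanningCoe_induce_of_closed (fun c hc d hcd => ?_) ha).mono fun c d h => ?_
  · exact mem_componentIn_of_adj hc (spanningCoe_induce_adj.1 hcd).2.1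
      (spanningCoe_induce_adj.1 hcd).2.2
  · obtain ⟨hc, hd, hcd⟩ := spanningCoe_induce_adj.1 h
    exact spanningCoe_induce_adj.2 ⟨hc, hd, (spanningCoe_induce_adj.1 hcd).2.2⟩

theorem exists_adj_mem_componentIn [DecidableEq V] {s : Finset V}
    (hs : (G.induce (s : Set V)).Preconnected) {v x : V} (hv : v ∈ s) (hx : x ∈ s.erase v) :
    ∃ z ∈ componentIn G (s.erase v) x, G.Adj v z := by
  have hxv : (G.induce (s : Set V)).spanningCoe.Reachable x v :=
    reachable_spanningCoe_induce_iff.2 (hs ⟨x, mem_of_mem_erase hx⟩ ⟨v, hv⟩)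
  obtain ⟨d, -, hd₁, hd₂⟩ := hxv.some.exists_boundary_dart (componentIn G (s.erase v) x)
    (mem_componentIn_self hx) (fun h => (mem_erase.1 (componentIn_subset _ _ h)).1 rfl)
  obtain ⟨-, hd₂s, hadj⟩ := spanningCoe_induce_adj.1 d.adj
  have hd₂v : d.toProd.2 = v := by
    by_contra hne
    exact hd₂ (mem_componentIn_of_adj hd₁ (mem_erase.2 ⟨hne, hd₂s⟩) hadj)
  exact ⟨d.toProd.1, hd₁, hd₂v ▸ hadj.symm⟩

end Components

theorem List.isChain_lt_and_not_between {α β : Type*} [LinearOrder β] (f : α → β) :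
    ∀ {l : List α}, l.Pairwise (fun a b => f a < f b) →
      l.IsChain (fun a b => f a < f b ∧ ∀ w ∈ l, ¬(f a < f w ∧ f w < f b))
  | [], _ => .nil
  | [_], _ => .singleton _
  | a :: b :: l, h => by
    obtain ⟨ha, hbl⟩ := List.pairwise_cons.1 h
    obtain ⟨hb, -⟩ := List.pairwise_cons.1 hbl
    refine List.isChain_cons_cons.2 ⟨⟨ha b List.mem_cons_self, fun w hw hab => ?_⟩,
      (isChain_lt_and_not_between f hbl).imp_of_mem_imp fun x y hx _ hxy => ⟨hxy.1, ?_⟩⟩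
    · rcases List.mem_cons.1 hw with rfl | hw
      · exact lt_irrefl _ hab.1
      rcases List.mem_cons.1 hw with rfl | hw
      · exact lt_irrefl _ hab.2
      · exact lt_asymm hab.2 (hb w hw)
    · rintro w hw ⟨hxw, hwy⟩
      rcases List.mem_cons.1 hw with rfl | hw
      · rcases List.mem_cons.1 hx with rfl | hx
        · exact lt_asymm hxw (ha _ List.mem_cons_self)
        · exact lt_asymm hxw (ha x (List.mem_cons_of_mem b hx))
      · exact hxy.2 w hw ⟨hxw, hwy⟩

theorem exists_list_sorted_by {V : Type*} {n : ℕ} (σ : V ≃ Fin n) (U : Finset V) :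
    ∃ l : List V, (∀ z, z ∈ l ↔ z ∈ U) ∧ l.length = #U ∧
      l.IsChain (fun a b => σ a < σ b ∧ ∀ w ∈ U, ¬(σ a < σ w ∧ σ w < σ b)) := by
  classical
  set l := ((U.image σ).sort (· ≤ ·)).map σ.symm
  have hmem : ∀ z, z ∈ l ↔ z ∈ U := fun z => by simp [l, Equiv.symm_apply_eq]
  have hsorted : l.Pairwise (fun a b => σ a < σ b) := by
    simpa [l, List.pairwise_map] using (sortedLT_sort (U.image σ)).pairwise
  refine ⟨l, hmem, by simp [l, card_image_of_injective U σ.injective], ?_⟩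
  exact (List.isChain_lt_and_not_between σ hsorted).imp fun a b h =>
    ⟨h.1, fun w hw => h.2 w ((hmem w).2 hw)⟩

section PerfectCancellation

open SimpleGraph

variable {V : Type*} [DecidableEq V] {n : ℕ} (G : SimpleGraph V) (σ : V ≃ Fin n)

/-- The perfect cancellation condition for `G[s]`; the components of `G[s] - w` are the sets
`componentIn G (s.erase w) x`. -/
def IsPCOOn (s : Finset V) : Prop :=
  ∀ w ∈ s, ∀ x ∈ s.erase w, SigmaLinked G σ (NPlus G σ w ∩ ↑(componentIn G (s.erase w) x))

variable {G σ}

/- Being σ-linked does not pass to subsets. But the σ-successor `c` of `a` in the larger linked set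
is adjacent to `a`, so forward closure puts `c` into the smaller set, where it has to be `b`. -/
theorem IsPCOOn.mono {s t : Finset V} (h : IsPCOOn G σ s) (hts : t ⊆ s)
    (hclosed : ∀ a ∈ t, ∀ b ∈ s, G.Adj a b → σ a < σ b → b ∈ t) : IsPCOOn G σ t := by
  classical
  rintro w hw x hx a b ⟨⟨hwa, hσwa⟩, hat⟩ ⟨⟨hwb, hσwb⟩, hbt⟩ hab hmid
  have hsub := componentIn_mono (G := G) (erase_subset_erase w hts) x
  set cand := (componentIn G (s.erase w) x).filter fun y => G.Adj w y ∧ σ w < σ y ∧ σ a < σ y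
  have hbc : b ∈ cand := mem_filter.2 ⟨hsub hbt, hwb, hσwb, hab⟩
  obtain ⟨c, hc, hmin⟩ := cand.exists_min_image σ ⟨b, hbc⟩
  obtain ⟨hcs, hwc, hσwc, hac⟩ := mem_filter.1 hc
  have hadj : G.Adj a c := h w (hts hw) x (erase_subset_erase w hts hx) ⟨⟨hwa, hσwa⟩, hsub hat⟩
    ⟨⟨hwc, hσwc⟩, hcs⟩ hac fun y ⟨⟨hwy, hσwy⟩, hy⟩ ⟨hay, hyc⟩ =>
      absurd (hmin y (mem_filter.2 ⟨hy, hwy, hσwy, hay⟩)) (not_le.2 hyc)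
  have hat' : a ∈ t := mem_of_mem_erase (componentIn_subset _ _ hat)
  have hcs' : c ∈ s := mem_of_mem_erase (componentIn_subset _ _ hcs)
  have hct : c ∈ componentIn G (t.erase w) x := mem_componentIn_of_adj hat
    (mem_erase.2 ⟨fun hcw => absurd hσwc (hcw ▸ lt_irrefl _), hclosed a hat' c hcs' hadj hac⟩) hadj
  obtain rfl : c = b := by
    by_contra hne
    exact hmid c ⟨⟨hwc, hσwc⟩, hct⟩
      ⟨hac, lt_of_le_of_ne (hmin b hbc) (σ.injective.ne hne)⟩
  exact hadj

theorem isPCOOn_univ [Fintype V] {σ : V ≃ Fin (Fintype.card V)} (h : IsPCO G σ) :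
    IsPCOOn G σ univ := by
  intro w _ x hx
  have hxw : x ≠ w := ne_of_mem_erase hx
  convert h w ((G.induce {u | u ≠ w}).connectedComponentMk ⟨x, hxw⟩) using 2
  have hS : ((univ.erase w : Finset V) : Set V) = {u | u ≠ w} := by ext; simp
  ext y
  rw [mem_coe, mem_componentIn, hS]
  simp only [Set.mem_image, ConnectedComponent.mem_supp_iff,
    mem_erase, mem_univ, and_true]
  constructor
  · rintro ⟨hyw, hr⟩
    refine ⟨⟨y, hyw⟩, ConnectedComponent.sound ?_, rfl⟩
    exact ((reachable_spanningCoe_induce_iff (x := ⟨x, hxw⟩) (y := ⟨y, hyw⟩)).1 hr).symm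
  · rintro ⟨⟨y, hyw⟩, hy, rfl⟩
    exact ⟨hyw, reachable_spanningCoe_induce_iff.2
      (ConnectedComponent.exact hy).symm⟩

end PerfectCancellation

section Construction

variable {V : Type*} [DecidableEq V] {n : ℕ} {G : SimpleGraph V} {σ : V ≃ Fin n}

theorem IsTimedNetwork.forall_gate_ne {s : Finset V} {C : List (V × V)}
    (hC : IsTimedNetwork G σ s C) {v : V} (hv : v ∉ s) : ∀ g ∈ C, g.1 ≠ v ∧ g.2 ≠ v :=
  fun g hg => ⟨ne_of_mem_of_not_mem (hC.gate_mem g hg).1 hv,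
    ne_of_mem_of_not_mem (hC.gate_mem g hg).2 hv⟩

theorem IsTimedNetwork.exists_isRelayStep {K : Finset V} {C : List (V × V)}
    (hC : IsTimedNetwork G σ K C) {v : V} (hv : v ∉ K) :
    ∃ (τ : V → ℕ) (T : V → V → ℕ) (wire : V → V → V),
      ∀ a b, UpEdge G σ K a b → IsRelayStep C v τ T wire a b := by
  obtain ⟨τ, hτ⟩ := hC.exists_schedule
  choose! T wire hT using hτ
  exact ⟨τ, T, wire, fun a b hab => ⟨ne_of_mem_of_not_mem hab.2.1 hv,
    ne_of_mem_of_not_mem hab.2.2.1 hv, (hT a b hab).1, (hT a b hab).2.1,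
    (pos_and_le_length_of_runCircuit_take_eq_pair hC.runCircuit_eq hab.ne (hT a b hab).2.2).2,
    (hT a b hab).2.2⟩⟩

theorem exists_schedule_thread {K : Finset V} {C : List (V × V)} {v : V} {τ : V → ℕ}
    {T : V → V → ℕ} {wire : V → V → V} (hCv : ∀ g ∈ C, g.1 ≠ v ∧ g.2 ≠ v)
    (hrelay : ∀ a b, UpEdge G σ K a b → IsRelayStep C v τ T wire a b) (hv : v ∉ K)
    (hvK : ∀ z ∈ K, σ v < σ z) {a₀ : V} {l : List V}
    (hl : ∀ z, z ∈ a₀ :: l ↔ z ∈ K ∧ G.Adj v z) (hchain : (a₀ :: l).IsChain (UpEdge G σ K)) :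
    ∃ τ' : V → ℕ, ∀ a b, UpEdge G σ (insert v K) a b →
      ∃ k w, τ' a < k ∧ k ≤ τ' b ∧ runCircuit ((thread C v T wire a₀ l).take k) w = {a, b} := by
  have hrelay' := hchain.imp hrelay
  have ha₀v : a₀ ≠ v := ne_of_mem_of_not_mem ((hl a₀).1 List.mem_cons_self).1 hv
  refine ⟨fun x => if x = v then 0 else 1 + weavePos T (min (τ x) C.length) 0 a₀ l,
    fun a b ⟨hadj, ha, hb, hσab⟩ => ?_⟩
  have hbK : b ∈ K := by
    refine (mem_insert.1 hb).resolve_left ?_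
    rintro rfl
    rcases mem_insert.1 ha with rfl | ha
    · exact lt_irrefl _ hσab
    · exact lt_asymm hσab (hvK a ha)
  simp only [if_neg (ne_of_mem_of_not_mem hbK hv)]
  by_cases hav : a = v
  · rw [if_pos hav]
    have hbl : b ∈ a₀ :: l := (hl b).2 ⟨hbK, hav ▸ hadj⟩
    refine ⟨_, v, Nat.succ_le_of_lt (Nat.lt_one_add_iff.2 (Nat.zero_le _)), le_rfl, ?_⟩
    rw [runCircuit_thread_take hCv hrelay' ha₀v (min_le_right _ _), update_self,
      tokenAt_min_eq hrelay' hbl, hav]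
  · rw [if_neg hav]
    have h := hrelay a b ⟨hadj, (mem_insert.1 ha).resolve_left hav, hbK, hσab⟩
    refine ⟨1 + weavePos T (T a b) 0 a₀ l, wire a b, ?_, ?_, ?_⟩
    · exact Nat.add_lt_add_left
        (weavePos_lt_weavePos (Nat.zero_le _) (min_lt_iff.2 (Or.inl h.lt_time))) 1
    · exact Nat.add_le_add_left
        (weavePos_le_weavePos (Nat.zero_le _) (le_min h.time_le h.time_le_length)) 1
    · rw [runCircuit_thread_take hCv hrelay' ha₀v h.time_le_length, update_of_ne (h.wire_ne hCv),
        h.runCircuit_take]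

theorem IsTimedNetwork.exists_insert {K : Finset V} {C : List (V × V)}
    (hC : IsTimedNetwork G σ K C) {v : V} (hv : v ∉ K) (hvK : ∀ z ∈ K, σ v < σ z) {a₀ : V}
    {l : List V} (hl : ∀ z, z ∈ a₀ :: l ↔ z ∈ K ∧ G.Adj v z)
    (hchain : (a₀ :: l).IsChain (UpEdge G σ K)) :
    ∃ W, IsTimedNetwork G σ (insert v K) W ∧ W.length = C.length + l.length + 2 := by
  obtain ⟨τ, T, wire, hrelay⟩ := hC.exists_isRelayStep hv
  have hCv := hC.forall_gate_ne hv
  have hrelay' := hchain.imp hrelay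
  have hmemK : ∀ z ∈ a₀ :: l, z ∈ K := fun z hz => ((hl z).1 hz).1
  have hgate : ∀ g ∈ thread C v T wire a₀ l, g ∈ C ∨ g.2 = v ∧ g.1 ∈ K := fun g hg => by
    rcases mem_thread hrelay' hg with hg | ⟨hg₂, hg₁ | ⟨g', hg', hg'₂⟩⟩
    · exact Or.inl hg
    · exact Or.inr ⟨hg₂, hmemK _ hg₁⟩
    · exact Or.inr ⟨hg₂, hg'₂ ▸ (hC.gate_mem g' hg').2⟩
  refine ⟨thread C v T wire a₀ l, ⟨fun g hg => ?_, fun g hg => ?_,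
    runCircuit_thread hCv hC.runCircuit_eq hrelay' (ne_of_mem_of_not_mem (hmemK a₀
      List.mem_cons_self) hv), exists_schedule_thread hCv hrelay hv hvK hl hchain⟩,
    length_thread hrelay'⟩
  · rcases hgate g hg with hg | ⟨hg₂, hg₁⟩
    · exact hC.gate_ne g hg
    · exact hg₂ ▸ ne_of_mem_of_not_mem hg₁ hv
  · rcases hgate g hg with hg | ⟨hg₂, hg₁⟩
    · exact (hC.gate_mem g hg).imp mem_insert_of_mem mem_insert_of_mem
    · exact ⟨mem_insert_of_mem hg₁, hg₂ ▸ mem_insert_self v K⟩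

theorem exists_isTimedNetwork_insert_componentIn {s : Finset V}
    (hconn : (G.induce (s : Set V)).Preconnected) (hpco : IsPCOOn G σ s) {v x : V} (hv : v ∈ s)
    (hvmin : ∀ z ∈ s.erase v, σ v < σ z) (hx : x ∈ s.erase v) {C : List (V × V)}
    (hC : IsTimedNetwork G σ (componentIn G (s.erase v) x) C)
    (hClen : C.length + 1 = #(upEdges G σ (componentIn G (s.erase v) x)) +
      #(componentIn G (s.erase v) x)) :
    ∃ W, IsTimedNetwork G σ (insert v (componentIn G (s.erase v) x)) W ∧
      W.length = #(upEdges G σ (insert v (componentIn G (s.erase v) x))) +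
        #(componentIn G (s.erase v) x) := by
  classical
  set K := componentIn G (s.erase v) x
  have hKs : K ⊆ s.erase v := componentIn_subset _ _
  have hvK : v ∉ K := fun h => (mem_erase.1 (hKs h)).1 rfl
  obtain ⟨l, hmem, hlen, hchain⟩ := exists_list_sorted_by σ (K.filter (G.Adj v))
  obtain ⟨z, hzK, hvz⟩ := exists_adj_mem_componentIn hconn hv hx
  have hl : l ≠ [] := by
    rintro rfl
    exact List.not_mem_nil ((hmem z).2 (mem_filter.2 ⟨hzK, hvz⟩))
  obtain ⟨a₀, l, rfl⟩ := List.exists_cons_of_ne_nil hl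
  have hchain' : (a₀ :: l).IsChain (UpEdge G σ K) := hchain.imp_of_mem_imp fun a b ha hb hab => by
    obtain ⟨haK, hva⟩ := mem_filter.1 ((hmem a).1 ha)
    obtain ⟨hbK, hvb⟩ := mem_filter.1 ((hmem b).1 hb)
    refine ⟨hpco v hv x hx ⟨⟨hva, hvmin a (hKs haK)⟩, haK⟩ ⟨⟨hvb, hvmin b (hKs hbK)⟩, hbK⟩ hab.1
      fun w ⟨⟨hvw, _⟩, hwK⟩ => hab.2 w (mem_filter.2 ⟨hwK, hvw⟩), haK, hbK, hab.1⟩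
  obtain ⟨W, hW, hWlen⟩ := hC.exists_insert hvK (fun z hz => hvmin z (hKs hz))
    (fun z => (hmem z).trans mem_filter) hchain'
  refine ⟨W, hW, ?_⟩
  rw [hWlen, card_upEdges_insert hvK (fun z hz => hvmin z (hKs hz)), ← hlen, List.length_cons]
  omega

theorem exists_isTimedNetwork_of_preconnected : ∀ s : Finset V, s.Nonempty →
    (G.induce (s : Set V)).Preconnected → IsPCOOn G σ s →
    ∃ C, IsTimedNetwork G σ s C ∧ C.length + 1 = #(upEdges G σ s) + #s := by
  intro s
  induction s using Finset.strongInduction with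
  | H s ih =>
  intro hne hconn hpco
  obtain ⟨v, hv, hvmin'⟩ := s.exists_min_image σ hne
  have hvmin : ∀ z ∈ s.erase v, σ v < σ z := fun z hz =>
    lt_of_le_of_ne (hvmin' z (mem_of_mem_erase hz)) (σ.injective.ne (ne_of_mem_erase hz).symm)
  have hU : {v} ∪ ((s.erase v).image (componentIn G (s.erase v))).biUnion id = s := by
    rw [biUnion_image_componentIn, ← insert_eq, insert_erase hv]
  obtain ⟨C, hC, hlen⟩ := exists_isTimedNetwork_union_biUnion {v} id 0
    ((s.erase v).image (componentIn G (s.erase v)))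
    (by simp only [mem_image]
        rintro _ ⟨x, -, rfl⟩ _ ⟨y, -, rfl⟩ hxy
        exact componentIn_disjoint_of_ne hxy)
    (fun a ha b hb => mem_singleton.1 ha ▸ hvmin' b (hU ▸ hb))
    (by simp only [mem_image, id, ← insert_eq]
        rintro _ ⟨x, hx, rfl⟩
        have hKs : componentIn G (s.erase v) x ⊆ s.erase v := componentIn_subset _ _
        obtain ⟨C, hC, hClen⟩ := ih _ (hKs.trans_ssubset (erase_ssubset hv))
          ⟨x, mem_componentIn_self hx⟩ (preconnected_induce_componentIn _ _)
          (hpco.mono (hKs.trans (erase_subset v s)) fun a ha b hb hab hσab =>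
            mem_componentIn_of_adj ha (mem_erase.2 ⟨fun hbv => lt_asymm hσab
              (hbv ▸ hvmin a (hKs ha)), hb⟩) hab)
        simpa using exists_isTimedNetwork_insert_componentIn hconn hpco hv hvmin hx hC hClen)
  rw [hU] at hC hlen
  rw [biUnion_image_componentIn] at hlen
  refine ⟨C, hC, ?_⟩
  have := card_erase_add_one hv
  omega

theorem IsTimedNetwork.isGPN [Fintype V] {C : List (V × V)} (h : IsTimedNetwork G σ univ C) :
    IsGPN G C := by
  obtain ⟨τ, hτ⟩ := h.exists_schedule
  refine ⟨h.gate_ne, fun u v huv => ?_, fun v => congrFun h.runCircuit_eq v⟩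
  rcases lt_or_gt_of_ne (σ.injective.ne huv.ne) with hlt | hlt
  · obtain ⟨k, w, -, -, hk⟩ := hτ u v ⟨huv, mem_univ _, mem_univ _, hlt⟩
    exact ⟨k, w, hk⟩
  · obtain ⟨k, w, -, -, hk⟩ := hτ v u ⟨huv.symm, mem_univ _, mem_univ _, hlt⟩
    exact ⟨k, w, hk.trans (pair_comm v u)⟩

end Construction

section Univ

open SimpleGraph

variable {V : Type*} [Fintype V] [DecidableEq V] {n : ℕ} {G : SimpleGraph V} {σ : V ≃ Fin n}

theorem exists_isTimedNetwork_univ (hpco : IsPCOOn G σ univ) :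
    ∃ C, IsTimedNetwork G σ univ C ∧
      C.length + Nat.card G.ConnectedComponent = #(upEdges G σ univ) + Fintype.card V := by
  classical
  let K : G.ConnectedComponent → Finset V := fun c => c.supp.toFinset
  have hmemK : ∀ c x, x ∈ K c ↔ G.connectedComponentMk x = c := by
    simp [K, ConnectedComponent.mem_supp_iff]
  obtain ⟨C, hC, hlen⟩ := exists_isTimedNetwork_union_biUnion ∅ K 1 univ
    (fun c _ c' _ hcc' => ⟨disjoint_left.2 fun x hx hx' =>
        hcc' (((hmemK c x).1 hx).symm.trans ((hmemK c' x).1 hx')),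
      fun a ha b hb hab => hcc' (((hmemK c a).1 ha).symm.trans
        ((ConnectedComponent.connectedComponentMk_eq_of_adj hab).trans
          ((hmemK c' b).1 hb)))⟩)
    (by simp) fun c _ => by
      have hpre : (G.induce (K c : Set V)).Preconnected := by
        rw [Set.coe_toFinset]
        exact c.connected_toSimpleGraph.preconnected
      simpa using exists_isTimedNetwork_of_preconnected (K c)
        (by simpa [K] using c.nonempty_supp) hpre
        (hpco.mono (subset_univ _) fun a ha b _ hab _ => (hmemK c b).2
          ((ConnectedComponent.connectedComponentMk_eq_of_adj hab).symm.trans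
            ((hmemK c a).1 ha)))
  have hU : univ.biUnion K = univ := by
    ext x
    simp [hmemK]
  rw [hU, empty_union] at hC
  rw [hU] at hlen
  exact ⟨C, hC, by simpa [Nat.card_eq_fintype_card] using hlen⟩

end Univ

/-- Every perfect cancellation graph with `n` vertices, `m` edges and `c` connected
components admits a graphic parity network of size exactly `m + n − c`. -/
theorem stmt4 {V : Type*} [Fintype V] [DecidableEq V] (G : SimpleGraph V)
    (h : PerfectCancellationGraph G) :
    ∃ C : List (V × V), IsGPN G C ∧
      C.length = Nat.card G.edgeSet + Fintype.card V - Nat.card G.ConnectedComponent := by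
  obtain ⟨σ, hσ⟩ := h
  obtain ⟨C, hC, hlen⟩ := exists_isTimedNetwork_univ (isPCOOn_univ hσ)
  refine ⟨C, hC.isGPN, ?_⟩
  rw [← card_upEdges_univ (σ := σ)]
  omega
end

section
/- Let G be a connected finite simple graph on n vertices. In every graphic parity network for G, the number of gates whose outcome is not binary (i.e., whose outcome does not have exactly two elements) is at least n − 1. -/
/-!
Keep a colouring `c` of the vertices, coarsened as the circuit runs, and for each wire the set of
colours occurring an odd number of times in its term. Invariant: each wire has at most one odd
colour, and every binary term seen so far is monochromatic (its odd colours are `{c u} ∆ {c v}`).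
The potential `∑ w, #(odd colours of w) - #colours` is `0` for the identity colouring and rises
only at a gate with a non-binary outcome: if the outcome would carry two odd colours `a ≠ b`,
recolouring `a` as `b` loses one colour and one odd colour at once. At the end every term is a
singleton and, `G` being connected, a single colour is left, so the potential is `n - 1`.
-/

open Finset
open scoped symmDiff

lemma Finset.odd_card_symmDiff_iff {V : Type*} [DecidableEq V] (r s : Finset V) :
    Odd #(r ∆ s) ↔ ¬(Odd #r ↔ Odd #s) := by
  have hunion : #(r ∆ s) = #(r \ s) + #(s \ r) :=
    card_union_of_disjoint disjoint_sdiff_sdiff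
  have hr := card_sdiff_add_card_inter r s
  have hs := card_sdiff_add_card_inter s r
  rw [inter_comm] at hs
  simp only [Nat.odd_iff]
  omega

lemma card_image_update_id {α : Type*} [DecidableEq α] {S : Finset α} {a b : α} (ha : a ∈ S)
    (hb : b ∈ S) (hab : a ≠ b) :
    #(S.image (Function.update id a b)) + 1 = #S := by
  have : S.image (Function.update id a b) = S.erase a := by
    ext x
    simp only [mem_image, mem_erase, Function.update_apply, id]
    grind
  rw [this, card_erase_add_one ha]

section OddColors

variable {V α β : Type*} [DecidableEq α]

def oddColors (c : V → α) (r : Finset V) : Finset α :=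
  {b ∈ r.image c | Odd #{x ∈ r | c x = b}}

@[simp]
lemma mem_oddColors {c : V → α} {r : Finset V} {b : α} :
    b ∈ oddColors c r ↔ Odd #{x ∈ r | c x = b} := by
  refine ⟨fun h => (mem_filter.mp h).2, fun h => mem_filter.mpr ⟨?_, h⟩⟩
  obtain ⟨x, hx⟩ := card_pos.mp h.pos
  rw [mem_filter] at hx
  exact mem_image.mpr ⟨x, hx.1, hx.2⟩

lemma oddColors_subset_image (c : V → α) (r : Finset V) : oddColors c r ⊆ r.image c :=
  filter_subset _ _

lemma oddColors_symmDiff [DecidableEq V] (c : V → α) (r s : Finset V) :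
    oddColors c (r ∆ s) = oddColors c r ∆ oddColors c s := by
  ext b
  have hfilter : {x ∈ r ∆ s | c x = b} = {x ∈ r | c x = b} ∆ {x ∈ s | c x = b} := by
    ext x
    simp only [mem_filter, mem_symmDiff]
    tauto
  rw [mem_symmDiff, mem_oddColors, mem_oddColors, mem_oddColors, hfilter,
    odd_card_symmDiff_iff]
  tauto

@[simp]
lemma oddColors_singleton (c : V → α) (v : V) : oddColors c {v} = {c v} := by
  ext b
  by_cases h : c v = b <;> simp [filter_singleton, h, Ne.symm]

lemma card_oddColors_pair [DecidableEq V] (c : V → α) {u v : V} (huv : u ≠ v) :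
    #(oddColors c {u, v}) = if c u = c v then 0 else 2 := by
  have hpair : ({u, v} : Finset V) = {u} ∆ {v} := by
    rw [symmDiff_eq_union (disjoint_singleton.mpr huv)]
    rfl
  rw [hpair, oddColors_symmDiff, oddColors_singleton, oddColors_singleton]
  split_ifs with h
  · simp [h]
  · rw [symmDiff_eq_union (disjoint_singleton.mpr h)]
    exact card_pair h

lemma card_oddColors_ne_one_of_card_eq_two [DecidableEq V] (c : V → α) {r : Finset V}
    (hr : #r = 2) : #(oddColors c r) ≠ 1 := by
  obtain ⟨u, v, huv, rfl⟩ := card_eq_two.mp hr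
  rw [card_oddColors_pair c huv]
  split_ifs <;> omega

lemma eq_of_card_oddColors_pair_le_one [DecidableEq V] (c : V → α) {u v : V}
    (h : #(oddColors c {u, v}) ≤ 1) : c u = c v := by
  rcases eq_or_ne u v with rfl | huv
  · rfl
  · rw [card_oddColors_pair c huv] at h
    split_ifs at h with hc
    · exact hc
    · omega

lemma oddColors_comp [DecidableEq β] (f : α → β) (c : V → α) (r : Finset V) :
    oddColors (f ∘ c) r = oddColors f (oddColors c r) := by
  ext y
  have hfiber :
      #{x ∈ r | f (c x) = y} = ∑ b ∈ {b ∈ r.image c | f b = y}, #{x ∈ r | c x = b} := by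
    rw [card_eq_sum_card_fiberwise (f := c) (t := {b ∈ r.image c | f b = y})]
    · refine sum_congr rfl fun b hb => congrArg card ?_
      rw [filter_filter]
      refine filter_congr fun x _ => ?_
      grind
    · intro x hx
      simp only [coe_filter, Set.mem_ofPred_eq] at hx ⊢
      exact ⟨mem_image_of_mem c hx.1, hx.2⟩
  rw [mem_oddColors, mem_oddColors, Function.comp_def, hfiber, odd_sum_iff_odd_card_odd]
  congr! 2
  ext b
  have hsub : b ∈ oddColors c r → b ∈ r.image c := fun hb => oddColors_subset_image c r hb
  simp only [mem_filter, ← mem_oddColors]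
  tauto

lemma card_oddColors_of_card_le_one (f : V → α) {R : Finset V} (hR : #R ≤ 1) :
    #(oddColors f R) = #R := by
  obtain h | ⟨a, rfl⟩ :=
    Nat.le_one_iff_eq_zero_or_eq_one.mp hR |>.imp card_eq_zero.mp card_eq_one.mp
  · simp [h, oddColors]
  · simp

end OddColors

lemma SimpleGraph.Reachable.eq_of_forall_adj {V α : Type*} {G : SimpleGraph V} {c : V → α}
    (hc : ∀ u v, G.Adj u v → c u = c v) {u v : V} (h : G.Reachable u v) : c u = c v := by
  obtain ⟨p⟩ := h
  induction p with
  | nil => rfl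
  | cons hadj _ ih => exact (hc _ _ hadj).trans ih

lemma SimpleGraph.Connected.card_image_eq_one {V α : Type*} [Fintype V] [DecidableEq α]
    {G : SimpleGraph V} (hG : G.Connected) {c : V → α} (hc : ∀ u v, G.Adj u v → c u = c v) :
    #(univ.image c) = 1 := by
  obtain ⟨v₀⟩ := hG.nonempty
  refine card_eq_one.mpr
    ⟨c v₀, eq_singleton_iff_unique_mem.mpr ⟨mem_image_of_mem c (mem_univ v₀), ?_⟩⟩
  simp only [mem_image, mem_univ, true_and, forall_exists_index, forall_apply_eq_imp_iff]
  exact fun u => (hG.preconnected u v₀).eq_of_forall_adj hc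

section Circuit

variable {V : Type*} [DecidableEq V]

lemma applyGate_apply_target (g : V × V) (t : V → Finset V) :
    applyGate g t g.2 = t g.1 ∆ t g.2 := by
  simp [applyGate]

lemma applyGate_apply_of_ne {g : V × V} (t : V → Finset V) {w : V} (hw : w ≠ g.2) :
    applyGate g t w = t w := by
  simp [applyGate, hw]

lemma sum_applyGate [Fintype V] (φ : Finset V → ℤ) (g : V × V) (t : V → Finset V) :
    ∑ w, φ (applyGate g t w) = ∑ w, φ (t w) + φ (applyGate g t g.2) - φ (t g.2) := by
  rw [← add_sum_erase _ _ (mem_univ g.2), ← add_sum_erase _ (fun w => φ (t w)) (mem_univ g.2),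
    sum_congr rfl fun w hw => by rw [applyGate_apply_of_ne t (ne_of_mem_erase hw)]]
  ring

lemma runCircuit_nil : runCircuit ([] : List (V × V)) = fun v => {v} := rfl

lemma runCircuit_append_singleton (C : List (V × V)) (g : V × V) :
    runCircuit (C ++ [g]) = applyGate g (runCircuit C) := by
  simp [runCircuit, List.foldl_append]

def nonbinaryCount (C : List (V × V)) : ℕ :=
  #{k : Fin C.length | #(runCircuit (C.take (k.val + 1)) (C.get k).2) ≠ 2}

lemma nonbinaryCount_nil : nonbinaryCount ([] : List (V × V)) = 0 := rfl

lemma nonbinaryCount_append_singleton (C : List (V × V)) (g : V × V) :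
    nonbinaryCount (C ++ [g]) =
      nonbinaryCount C + if #(applyGate g (runCircuit C) g.2) ≠ 2 then 1 else 0 := by
  simp only [nonbinaryCount, card_filter]
  rw [← Fin.sum_congr' _ (by simp : C.length + 1 = (C ++ [g]).length), Fin.sum_univ_castSucc]
  congr 1
  · refine sum_congr rfl fun i _ => ?_
    simp [List.take_append_of_le_length (Nat.succ_le_of_lt i.isLt), List.getElem_append_left]
  · simp [List.take_of_length_le, runCircuit_append_singleton]

end Circuit

section Potential

variable {V α : Type*} [Fintype V] [DecidableEq α]

def potential (c : V → α) (t : V → Finset V) : ℤ :=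
  ∑ w, (#(oddColors c (t w)) : ℤ) - #(univ.image c)

lemma potential_singleton (c : V → α) :
    potential c (fun v => {v}) = Fintype.card V - #(univ.image c) := by
  simp [potential]

variable [DecidableEq V]

lemma potential_applyGate (c : V → α) (g : V × V) (t : V → Finset V) :
    potential c (applyGate g t) =
      potential c t + #(oddColors c (applyGate g t g.2)) - #(oddColors c (t g.2)) := by
  unfold potential
  rw [sum_applyGate (fun r => (#(oddColors c r) : ℤ))]
  ring

lemma potential_applyGate_le_of_card_le_one (c : V → α) (g : V × V) (t : V → Finset V)
    (hsmall : #(oddColors c (applyGate g t g.2)) ≤ 1) :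
    potential c (applyGate g t) ≤
      potential c t + if #(applyGate g t g.2) ≠ 2 then 1 else 0 := by
  rw [potential_applyGate]
  split_ifs with h
  · omega
  · have := card_oddColors_ne_one_of_card_eq_two c (not_not.mp h)
    omega

lemma exists_coarsening_potential_applyGate_le (c : V → α) (g : V × V) (t : V → Finset V)
    (ht : ∀ w, #(oddColors c (t w)) ≤ 1) :
    ∃ f : α → α, (∀ w, #(oddColors (f ∘ c) (applyGate g t w)) ≤ 1) ∧
      potential (f ∘ c) (applyGate g t) ≤
        potential c t + if #(applyGate g t g.2) ≠ 2 then 1 else 0 := by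
  set A := oddColors c (t g.1)
  set B := oddColors c (t g.2)
  have hnew : oddColors c (applyGate g t g.2) = A ∆ B := by
    rw [applyGate_apply_target, oddColors_symmDiff]
  by_cases hsmall : #(A ∆ B) ≤ 1
  · refine ⟨id, fun w => ?_, potential_applyGate_le_of_card_le_one c g t (hnew ▸ hsmall)⟩
    by_cases hw : w = g.2
    · rwa [hw, Function.id_comp, hnew]
    · rw [Function.id_comp, applyGate_apply_of_ne t hw]
      exact ht w
  -- both wires carry a single odd colour and these differ: merge them by recolouring `a` as `b`
  have hAB : #(A ∆ B) ≤ #A + #B :=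
    (card_le_card symmDiff_subset_union).trans (card_union_le A B)
  have hA1 : #A ≤ 1 := ht g.1
  have hB1 : #B ≤ 1 := ht g.2
  obtain ⟨a, hA⟩ := card_eq_one.mp (show #A = 1 by omega)
  obtain ⟨b, hB⟩ := card_eq_one.mp (show #B = 1 by omega)
  have hab : a ≠ b := by
    rintro rfl
    simp [hA, hB] at hsmall
  have hrange : ∀ {x} (r : Finset V), x ∈ oddColors c r → x ∈ univ.image c := fun r hx =>
    image_subset_image (subset_univ r) (oddColors_subset_image c r hx)
  set f := Function.update id a b
  have hkeep : ∀ r, #(oddColors c r) ≤ 1 → #(oddColors (f ∘ c) r) = #(oddColors c r) :=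
    fun r hr => by rw [oddColors_comp, card_oddColors_of_card_le_one f hr]
  have hmerged : oddColors (f ∘ c) (applyGate g t g.2) = ∅ := by
    rw [oddColors_comp, hnew, oddColors_symmDiff, hA, hB, oddColors_singleton,
      oddColors_singleton]
    simp [f, Function.update_of_ne (Ne.symm hab)]
  refine ⟨f, fun w => ?_, ?_⟩
  · by_cases hw : w = g.2
    · simp [hw, hmerged]
    · rw [applyGate_apply_of_ne t hw, hkeep _ (ht w)]
      exact ht w
  · have himage : #(univ.image (f ∘ c)) + 1 = #(univ.image c) := by
      rw [← image_image]
      exact card_image_update_id (hrange _ (hA ▸ mem_singleton_self a))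
        (hrange _ (hB ▸ mem_singleton_self b)) hab
    have hpot : potential (f ∘ c) t = potential c t + 1 := by
      simp only [potential, hkeep _ (ht _)]
      omega
    have hB_card : #(oddColors c (t g.2)) = 1 := by rw [← card_singleton b, ← hB]
    rw [potential_applyGate, hmerged, hkeep _ (ht g.2), hB_card, card_empty]
    split_ifs <;> omega

end Potential

theorem exists_coloring_potential_le_nonbinaryCount {V : Type*} [Fintype V] [DecidableEq V]
    (C : List (V × V)) :
    ∃ c : V → V, (∀ w, #(oddColors c (runCircuit C w)) ≤ 1) ∧
      (∀ k w u v, runCircuit (C.take k) w = {u, v} → c u = c v) ∧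
      potential c (runCircuit C) ≤ nonbinaryCount C := by
  induction C using List.reverseRecOn with
  | nil =>
    refine ⟨id, fun w => by simp [runCircuit_nil], fun k w u v h => ?_, ?_⟩
    · rw [List.take_nil, runCircuit_nil] at h
      exact eq_of_card_oddColors_pair_le_one id (by simp [← h])
    · simp [runCircuit_nil, potential_singleton, nonbinaryCount_nil]
  | append_singleton C g ih =>
    obtain ⟨c, hc, hpairs, hpot⟩ := ih
    obtain ⟨f, hfc, hfpot⟩ := exists_coarsening_potential_applyGate_le c g (runCircuit C) hc
    refine ⟨f ∘ c, by rwa [runCircuit_append_singleton], fun k w u v h => ?_, ?_⟩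
    · rcases le_or_gt k C.length with hk | hk
      · rw [List.take_append_of_le_length hk] at h
        exact congrArg f (hpairs k w u v h)
      · rw [List.take_of_length_le (by simp; omega), runCircuit_append_singleton] at h
        exact eq_of_card_oddColors_pair_le_one _ (h ▸ hfc w)
    · rw [runCircuit_append_singleton, nonbinaryCount_append_singleton]
      push_cast
      linarith

/-- In every graphic parity network for a connected graph on `n` vertices, at least
`n − 1` gates have a non-binary outcome (the term on the target wire right after the
gate does not have exactly two elements). -/
theorem stmt6 {V : Type*} [Fintype V] [DecidableEq V] (G : SimpleGraph V)
    (hconn : G.Connected) (C : List (V × V)) (h : IsGPN G C) :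
    Fintype.card V - 1 ≤
      (Finset.univ.filter fun k : Fin C.length =>
        (runCircuit (C.take (k.val + 1)) (C.get k).2).card ≠ 2).card := by
  obtain ⟨c, -, hpairs, hpot⟩ := exists_coloring_potential_le_nonbinaryCount C
  have hadj : ∀ u v, G.Adj u v → c u = c v := fun u v huv =>
    let ⟨k, w, hw⟩ := h.2.1 u v huv
    hpairs k w u v hw
  rw [show runCircuit C = fun v => {v} from funext h.2.2, potential_singleton,
    hconn.card_image_eq_one hadj] at hpot
  change _ ≤ nonbinaryCount C
  omega
end
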